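/- arXiv:math/0606545 — 2 statements merged into one kernel-verified Lean document; each statement's English description precedes it below -/
import Mathlib

section
/- For arbitrary functions λ : ℕ → ℂ and μ : ℕ → ℝ, the inverse harmonic oscillator coefficient matrix satisfies the isometry form identity: for all finitely supported u, v ∈ ℓ²(ℕ), 2 Re( ⟨u, F⁰₀ u⟩ + ⟨u, F⁰₁ v⟩ + ⟨v, F¹₀ u⟩ ) + ‖F¹₀ u‖² = 0. -/
/-- The coefficient `F⁰₀ = -½|λ|²(N+1) + iμ(N)` of the inverse harmonic oscillator model,
acting pointwise on sequences. -/
noncomputable def ihoF00 (lam : ℕ → ℂ) (mu : ℕ → ℝ) (u : ℕ → ℂ) : ℕ → ℂ :=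
  fun n => (-(1 / 2 : ℂ) * ((‖lam (n + 1)‖ : ℝ) : ℂ) ^ 2 + Complex.I * (mu n : ℂ)) * u n

/-- The coefficient `F⁰₁ = W*λ̄(N)`: `F⁰₁ e_n = conj(λ(n)) e_{n-1}`, `F⁰₁ e₀ = 0`. -/
noncomputable def ihoF01 (lam : ℕ → ℂ) (u : ℕ → ℂ) : ℕ → ℂ :=
  fun n => (starRingEnd ℂ) (lam (n + 1)) * u (n + 1)

/-- The coefficient `F¹₀ = -λ(N)W`: `F¹₀ e_n = -λ(n+1) e_{n+1}`. -/
noncomputable def ihoF10 (lam : ℕ → ℂ) (u : ℕ → ℂ) : ℕ → ℂ :=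
  fun n => match n with
  | 0 => 0
  | k + 1 => -lam (k + 1) * u k

/-- The `ℓ²` inner product of two (finitely supported) sequences. -/
noncomputable def l2ip (x y : ℕ → ℂ) : ℂ := ∑' n, (starRingEnd ℂ) (x n) * y n

/-- For arbitrary `λ : ℕ → ℂ`, `μ : ℕ → ℝ`, the inverse harmonic oscillator
coefficient matrix satisfies the isometry form identity:
`2 Re(⟨u, F⁰₀ u⟩ + ⟨u, F⁰₁ v⟩ + ⟨v, F¹₀ u⟩) + ‖F¹₀ u‖² = 0`
for all finitely supported `u, v ∈ ℓ²(ℕ)`. -/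
theorem iho_isometry_form_identity (lam : ℕ → ℂ) (mu : ℕ → ℝ)
    (u v : ℕ → ℂ) (hu : (Function.support u).Finite) (hv : (Function.support v).Finite) :
    2 * ((l2ip u (ihoF00 lam mu u) + l2ip u (ihoF01 lam v) + l2ip v (ihoF10 lam u)).re)
      + ∑' n, ‖ihoF10 lam u n‖ ^ 2 = 0 := by
  classical
  set s : Finset ℕ := hu.toFinset with hs
  have hus : ∀ n, n ∉ s → u n = 0 := by
    intro n hn
    by_contra h
    exact hn (by simpa [hs] using h)
  set t : Finset ℕ := s.image Nat.succ with ht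
  have hA : l2ip u (ihoF00 lam mu u)
      = ∑ n ∈ s, (starRingEnd ℂ) (u n) * ihoF00 lam mu u n := by
    apply tsum_eq_sum
    intro n hn; simp [ihoF00, hus n hn]
  have hB : l2ip u (ihoF01 lam v)
      = ∑ n ∈ s, (starRingEnd ℂ) (u n) * ihoF01 lam v n := by
    apply tsum_eq_sum
    intro n hn; simp [hus n hn]
  have hC : l2ip v (ihoF10 lam u)
      = ∑ n ∈ s, (starRingEnd ℂ) (v (n + 1)) * (-lam (n + 1) * u n) := by
    have h1 : l2ip v (ihoF10 lam u)
        = ∑ n ∈ t, (starRingEnd ℂ) (v n) * ihoF10 lam u n := by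
      apply tsum_eq_sum
      intro n hn
      match n with
      | 0 => simp [ihoF10]
      | k + 1 =>
        have hk : k ∉ s := fun h => hn (Finset.mem_image_of_mem _ h)
        simp [ihoF10, hus k hk]
    rw [h1, ht, Finset.sum_image (fun a _ b _ h => Nat.succ_injective h)]
    rfl
  have hD : (∑' n, ‖ihoF10 lam u n‖ ^ 2 : ℝ)
      = ∑ n ∈ s, ‖-lam (n + 1) * u n‖ ^ 2 := by
    have h1 : (∑' n, ‖ihoF10 lam u n‖ ^ 2 : ℝ)
        = ∑ n ∈ t, ‖ihoF10 lam u n‖ ^ 2 := by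
      apply tsum_eq_sum
      intro n hn
      match n with
      | 0 => simp [ihoF10]
      | k + 1 =>
        have hk : k ∉ s := fun h => hn (Finset.mem_image_of_mem _ h)
        simp [ihoF10, hus k hk]
    rw [h1, ht, Finset.sum_image (fun a _ b _ h => Nat.succ_injective h)]
    rfl
  rw [hA, hB, hC, hD, ← Finset.sum_add_distrib, ← Finset.sum_add_distrib,
    Complex.re_sum, Finset.mul_sum, ← Finset.sum_add_distrib]
  apply Finset.sum_eq_zero
  intro n _
  have habs : (‖lam (n + 1)‖ : ℝ) ^ 2 = Complex.normSq (lam (n + 1)) :=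
    Complex.sq_norm _
  simp only [ihoF00, ihoF01, map_mul, map_neg, mul_pow, neg_pow, Complex.sq_norm,
    ← Complex.ofReal_pow, Complex.add_re, Complex.mul_re,
    Complex.mul_im, Complex.neg_re, Complex.neg_im, Complex.add_im, Complex.conj_re,
    Complex.conj_im, Complex.I_re, Complex.I_im, Complex.ofReal_re, Complex.ofReal_im,
    Complex.normSq_apply, Complex.div_re, Complex.div_im, Complex.one_re, Complex.one_im,
    Complex.re_ofNat, Complex.im_ofNat]
  ring
end

section
/- For arbitrary functions λ : ℕ → ℂ and μ : ℕ → ℝ, the operator A = F⁰₀ + F⁰₁ − ½I restricted to the finitely supported sequences is dissipative: Re⟨u, (F⁰₀ + F⁰₁ − ½I)u⟩ ≤ 0 for every finitely supported u ∈ ℓ²(ℕ). -/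
/-!
Pointwise, `Re(conj(u n) · (A u) n) ≤ ½‖u (n+1)‖² - ½‖u n‖²`: the diagonal part contributes
`-½(‖λ(n+1)‖² + 1)‖u n‖²`, and AM-GM absorbs the off-diagonal term `conj(u n) conj(λ(n+1)) u(n+1)`
into `½‖λ(n+1)‖²‖u n‖² + ½‖u(n+1)‖²`. Summing, the right-hand side telescopes to `-½‖u 0‖² ≤ 0`.
-/

open Finset ComplexConjugate

namespace Complex

theorem re_conj_mul_mul_self (c x : ℂ) : (conj x * (c * x)).re = c.re * ‖x‖ ^ 2 := by
  rw [mul_left_comm, mul_comm (conj x), mul_conj, re_mul_ofReal, normSq_eq_norm_sq]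

theorem re_mul_le_sq_norm_add_sq_norm_div_two (z w : ℂ) :
    (z * w).re ≤ (‖z‖ ^ 2 + ‖w‖ ^ 2) / 2 :=
  calc (z * w).re ≤ ‖z‖ * ‖w‖ := by simpa using re_le_norm (z * w)
    _ ≤ (‖z‖ ^ 2 + ‖w‖ ^ 2) / 2 := by nlinarith [two_mul_le_add_sq ‖z‖ ‖w‖]

end Complex

theorem l2ip_eq_sum_range {x : ℕ → ℂ} (y : ℕ → ℂ) {N : ℕ} (hx : ∀ n, N < n → x n = 0) :
    l2ip x y = ∑ n ∈ range (N + 1), conj (x n) * y n :=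
  tsum_eq_sum fun n hn => by simp [hx n (by simpa using hn)]

theorem re_conj_mul_iho_le (lam : ℕ → ℂ) (mu : ℕ → ℝ) (u : ℕ → ℂ) (n : ℕ) :
    (conj (u n) * (ihoF00 lam mu u n + ihoF01 lam u n - (1 / 2 : ℂ) * u n)).re
      ≤ ‖u (n + 1)‖ ^ 2 / 2 - ‖u n‖ ^ 2 / 2 := by
  set c : ℂ := -(1 / 2 : ℂ) * ((‖lam (n + 1)‖ : ℝ) : ℂ) ^ 2 + Complex.I * (mu n : ℂ) - 1 / 2
  have hsplit : conj (u n) * (ihoF00 lam mu u n + ihoF01 lam u n - (1 / 2 : ℂ) * u n)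
      = conj (u n) * (c * u n) + conj (lam (n + 1) * u n) * u (n + 1) := by
    simp only [ihoF00, ihoF01, c, map_mul]
    ring
  have hc : c.re = -(1 / 2) * ‖lam (n + 1)‖ ^ 2 - 1 / 2 := by
    simp [c, ← Complex.ofReal_pow]
  have hamgm := Complex.re_mul_le_sq_norm_add_sq_norm_div_two (conj (lam (n + 1) * u n)) (u (n + 1))
  rw [Complex.norm_conj, norm_mul, mul_pow] at hamgm
  rw [hsplit, Complex.add_re, Complex.re_conj_mul_mul_self, hc]
  linarith

/-- For arbitrary `λ : ℕ → ℂ` and `μ : ℕ → ℝ`, the operator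
`A = F⁰₀ + F⁰₁ - ½I` restricted to finitely supported sequences is dissipative:
`Re⟨u, (F⁰₀ + F⁰₁ - ½I)u⟩ ≤ 0` for every finitely supported `u ∈ ℓ²(ℕ)`. -/
theorem iho_affine_combination_dissipative (lam : ℕ → ℂ) (mu : ℕ → ℝ)
    (u : ℕ → ℂ) (hu : (Function.support u).Finite) :
    (l2ip u (fun n => ihoF00 lam mu u n + ihoF01 lam u n - (1 / 2 : ℂ) * u n)).re ≤ 0 := by
  obtain ⟨N, hN⟩ := hu.bddAbove
  have hvanish : ∀ n, N < n → u n = 0 := fun n hn =>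
    Function.notMem_support.mp fun h => hn.not_ge (hN h)
  rw [l2ip_eq_sum_range _ hvanish, Complex.re_sum]
  calc ∑ n ∈ range (N + 1), _
      ≤ ∑ n ∈ range (N + 1), (‖u (n + 1)‖ ^ 2 / 2 - ‖u n‖ ^ 2 / 2) :=
        sum_le_sum fun n _ => re_conj_mul_iho_le lam mu u n
    _ = ‖u (N + 1)‖ ^ 2 / 2 - ‖u 0‖ ^ 2 / 2 := sum_range_sub (fun n => ‖u n‖ ^ 2 / 2) (N + 1)
    _ ≤ 0 := by
        rw [hvanish (N + 1) N.lt_succ_self]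
        simp only [norm_zero]
        nlinarith [sq_nonneg ‖u 0‖]
end
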